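/- An undirected graph is Markov equivalent to some directed acyclic graph if and only if it is chordal. -/

import Mathlib

/-- A loopless mixed graph with three kinds of edges: lines (undirected),
arrows (directed, `arrow i j` means `i → j`), and arcs (bidirected). -/
structure MixedGraph (V : Type*) where
  line : V → V → Prop
  arrow : V → V → Prop
  arc : V → V → Prop
  line_symm : ∀ i j, line i j → line j i
  arc_symm : ∀ i j, arc i j → arc j i
  line_irrefl : ∀ i, ¬ line i i
  arrow_irrefl : ∀ i, ¬ arrow i i
  arc_irrefl : ∀ i, ¬ arc i i

namespace MixedGraph

variable {V : Type*}

/-- `i` and `j` are adjacent (joined by some edge). -/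
def adj (G : MixedGraph V) (i j : V) : Prop :=
  G.line i j ∨ G.arrow i j ∨ G.arrow j i ∨ G.arc i j

/-- There is an edge between `i` and `j` with an arrowhead pointing at `j`. -/
def headAt (G : MixedGraph V) (i j : V) : Prop :=
  G.arrow i j ∨ G.arc i j

/-- `j` is a collider on the V-configuration `⟨i, j, k⟩`. -/
def collider (G : MixedGraph V) (i j k : V) : Prop :=
  G.headAt i j ∧ G.headAt k j

/-- `i` is an ancestor of `j` (a direction-preserving path of arrows from `i` to `j`). -/
def anc (G : MixedGraph V) (i j : V) : Prop :=
  Relation.ReflTransGen G.arrow i j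

/-- A path: a list of pairwise distinct nodes, consecutive ones adjacent. -/
def isPath (G : MixedGraph V) (p : List V) : Prop :=
  p.Nodup ∧ List.Chain' G.adj p

/-- Inner-node condition for an `m`-connecting path given `C`:
every collider inner node is in `C` or an ancestor of a node of `C`,
every non-collider inner node is outside `C`. -/
def innerOK (G : MixedGraph V) (C : Set V) : List V → Prop
  | a :: b :: c :: rest =>
      ((G.collider a b c → b ∈ C ∨ ∃ x ∈ C, G.anc b x) ∧
        (¬ G.collider a b c → b ∉ C)) ∧
      innerOK G C (b :: c :: rest)
  | _ => True

/-- `p` is an `m`-connecting path between `i` and `j` given `C`. -/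
def mConnecting (G : MixedGraph V) (C : Set V) (i j : V) (p : List V) : Prop :=
  G.isPath p ∧ 2 ≤ p.length ∧ p.head? = some i ∧ p.getLast? = some j ∧
    G.innerOK C p

/-- `A` is `m`-separated from `B` given `C`. -/
def mSep (G : MixedGraph V) (A B C : Set V) : Prop :=
  ¬ ∃ (i j : V) (p : List V), i ∈ A ∧ j ∈ B ∧ G.mConnecting C i j p

/-- Two mixed graphs on the same node set are Markov equivalent if they induce
exactly the same `m`-separation statements among disjoint sets. -/
def markovEquiv (G₁ G₂ : MixedGraph V) : Prop :=
  ∀ A B C : Set V, Disjoint A B → Disjoint A C → Disjoint B C →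
    (G₁.mSep A B C ↔ G₂.mSep A B C)

/-- An undirected graph: only line edges. -/
def isUG (G : MixedGraph V) : Prop :=
  (∀ i j, ¬ G.arrow i j) ∧ (∀ i j, ¬ G.arc i j)

/-- A bidirected graph: only arc edges. -/
def isBG (G : MixedGraph V) : Prop :=
  (∀ i j, ¬ G.arrow i j) ∧ (∀ i j, ¬ G.line i j)

/-- A directed acyclic graph: only arrows, and no directed cycle. -/
def isDAG (G : MixedGraph V) : Prop :=
  (∀ i j, ¬ G.line i j) ∧ (∀ i j, ¬ G.arc i j) ∧ ∀ i, ¬ Relation.TransGen G.arrow i i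

/-- An ancestral graph: no node is an ancestor of one of its parents or spouses,
and no arrowhead points at a node having a neighbour. -/
def isAncestral (G : MixedGraph V) : Prop :=
  (∀ i j, (G.arrow j i ∨ G.arc j i) → ¬ G.anc i j) ∧
  (∀ i j k, G.line i j → ¬ G.headAt k i)

/-- Maximality: every pair of distinct non-adjacent nodes can be `m`-separated. -/
def isMaximal (G : MixedGraph V) : Prop :=
  ∀ i j, i ≠ j → ¬ G.adj i j → ∃ C : Set V, i ∉ C ∧ j ∉ C ∧ G.mSep {i} {j} C

/-- A maximal ancestral graph. -/
def isMAG (G : MixedGraph V) : Prop :=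
  G.isAncestral ∧ G.isMaximal

/-- Two graphs have the same skeleton. -/
def sameSkeleton (G₁ G₂ : MixedGraph V) : Prop :=
  ∀ i j, G₁.adj i j ↔ G₂.adj i j

/-- An unshielded collider V-configuration `⟨i, j, k⟩`. -/
def unshieldedCollider (G : MixedGraph V) (i j k : V) : Prop :=
  G.collider i j k ∧ i ≠ k ∧ ¬ G.adj i k

end MixedGraph

/-- `p` is a chordless cycle (length `≥ 4`) for the adjacency relation `adj`:
consecutive nodes (cyclically) are adjacent and no other pairs are adjacent. -/
def chordlessCycleList {V : Type*} (adj : V → V → Prop) (p : List V) : Prop :=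
  4 ≤ p.length ∧ p.Nodup ∧ List.Chain' adj p ∧
  (∀ a b, p.head? = some a → p.getLast? = some b → adj b a) ∧
  ∀ m n a b, m + 2 ≤ n → n < p.length → ¬(m = 0 ∧ n = p.length - 1) →
    p[m]? = some a → p[n]? = some b → ¬ adj a b

/-- `adj` is chordal: it has no chordless cycle on four or more nodes. -/
def chordalRel {V : Type*} (adj : V → V → Prop) : Prop :=
  ¬ ∃ p, chordlessCycleList adj p


/-!
A DAG is Markov equivalent to an undirected graph `G` exactly when it has the skeleton of `G` and
no unshielded collider. The skeleton is forced because both kinds of graph separate every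
non-adjacent pair: a DAG by the ancestors of the pair, an undirected graph by all other nodes. An
unshielded collider `a → b ← c` of the DAG connects `a` and `c` given all other nodes, which
separate them in `G`. Conversely, deleting the middle node of a shielded collider keeps a path
`m`-connecting, so both graphs have collider-free `m`-connecting paths, on which `m`-connection
in `G` and in the DAG agree.

Such a DAG exists iff the skeleton is chordal. A sink of a chordless cycle of length at least four
would be an unshielded collider. Conversely, a chordal graph has a perfect elimination order, since
by Dirac's lemma it has a simplicial vertex, and orienting the edges along that order creates no
unshielded collider.
-/

section Chordless

variable {V : Type*} {r : V → V → Prop} {p : List V}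

theorem List.exists_eq_append_cons_cons_cons {m : V} (hm : m ∈ p) (hh : p.head? ≠ some m)
    (hl : p.getLast? ≠ some m) : ∃ l₁ a c l₂, p = l₁ ++ a :: m :: c :: l₂ := by
  obtain ⟨s, t, rfl⟩ := List.append_of_mem hm
  rcases s.eq_nil_or_concat with rfl | ⟨s, a, rfl⟩
  · simp at hh
  cases t with
  | nil => simp at hl
  | cons c t => exact ⟨s, a, c, t, by simp⟩

theorem List.IsChain.rel_getElem (h : List.IsChain r p) {k l : ℕ} (hl : l < p.length)
    (hkl : l = k + 1) : r (p[k]'(by omega)) p[l] := by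
  subst hkl
  exact List.isChain_iff_getElem.1 h k hl

theorem chordlessCycleList.not_rel (hp : chordlessCycleList r p) {k l : ℕ} (hl : l < p.length)
    (hkl : k + 2 ≤ l) (hwrap : ¬ (k = 0 ∧ l = p.length - 1)) : ¬ r (p[k]'(by omega)) p[l] :=
  hp.2.2.2.2 k l _ _ hkl hl hwrap (List.getElem?_eq_getElem _) (List.getElem?_eq_getElem _)

theorem chordlessCycleList.exists_nonadj_neighbors (hsym : ∀ x y, r x y → r y x)
    (hp : chordlessCycleList r p) {m : V} (hm : m ∈ p) :
    ∃ u ∈ p, ∃ v ∈ p, r u m ∧ r v m ∧ u ≠ v ∧ ¬ r u v := by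
  obtain ⟨hlen, hnd, hch, hwrap, -⟩ := id hp
  obtain ⟨t, ht, rfl⟩ := List.mem_iff_getElem.1 hm
  have hwrap : r p[p.length - 1] p[0] :=
    hwrap _ _ (List.head?_eq_getElem? ▸ List.getElem?_eq_getElem _)
      (List.getLast?_eq_getElem? ▸ List.getElem?_eq_getElem _)
  have hne : ∀ {k l} {hk : k < p.length} {hl : l < p.length}, k ≠ l → p[k] ≠ p[l] :=
    fun hkl e => hkl (hnd.getElem_inj_iff.1 e)
  have hsucc := fun {k l} (hl : l < p.length) (hkl : l = k + 1) => hch.rel_getElem hl hkl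
  rcases Nat.eq_zero_or_pos t with rfl | ht0
  · exact ⟨p[1], List.getElem_mem _, p[p.length - 1], List.getElem_mem _,
      hsym _ _ (hsucc _ rfl), hwrap, hne (by omega), hp.not_rel (by omega) (by omega) (by omega)⟩
  rcases Nat.lt_or_ge (t + 1) p.length with ht1 | ht1
  · exact ⟨p[t - 1], List.getElem_mem _, p[t + 1], List.getElem_mem _,
      hsucc ht (by omega), hsym _ _ (hsucc ht1 rfl), hne (by omega),
      hp.not_rel ht1 (by omega) (by omega)⟩
  · obtain rfl : t = p.length - 1 := by omega
    exact ⟨p[p.length - 2], List.getElem_mem _, p[0], List.getElem_mem _,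
      hsucc ht (by omega), hsym _ _ hwrap, hne (by omega),
      fun h => hp.not_rel (k := 0) (by omega) (by omega) (by omega) (hsym _ _ h)⟩

def chordlessList (r : V → V → Prop) (p : List V) : Prop :=
  ∀ k l (hl : l < p.length) (_ : k + 2 ≤ l), ¬ r (p[k]'(by omega)) p[l]

/-- A repeated node, together with a neighbour of one of its occurrences, would give a chord. -/
theorem chordlessList.nodup (hirr : ∀ x, ¬ r x x) (hp : chordlessList r p)
    (hch : List.IsChain r p) (hne : p.head? ≠ p.getLast?) : p.Nodup := by
  rw [List.nodup_iff_getElem?_ne_getElem?]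
  intro k l hkl hl he
  rw [List.getElem?_eq_getElem (show k < p.length by omega), List.getElem?_eq_getElem hl,
    Option.some_inj] at he
  rcases Nat.eq_or_lt_of_le hkl with rfl | hkl
  · exact hirr _ (he ▸ hch.rel_getElem hl rfl)
  rcases Nat.lt_or_ge (l + 1) p.length with hl1 | hl1
  · exact hp k (l + 1) hl1 (by omega) (he ▸ hch.rel_getElem hl1 rfl)
  rcases Nat.eq_zero_or_pos k with rfl | hk
  · refine hne ?_
    rw [List.head?_eq_getElem?, List.getLast?_eq_getElem?,
      List.getElem?_eq_getElem (show 0 < p.length by omega),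
      List.getElem?_eq_getElem (show p.length - 1 < p.length by omega), he]
    congr 2
    omega
  · exact hp (k - 1) l hl (by omega)
      (he ▸ hch.rel_getElem (k := k - 1) (l := k) (by omega) (by omega))

/-- A shortest such chain is chordless, since a chord would shortcut it. -/
theorem exists_chordlessList {P : V → Prop} {x y : V} (hch : List.IsChain r p)
    (hx : p.head? = some x) (hy : p.getLast? = some y) (hP : ∀ z ∈ p, P z) :
    ∃ q, List.IsChain r q ∧ q.head? = some x ∧ q.getLast? = some y ∧ (∀ z ∈ q, P z) ∧
      chordlessList r q := by
  obtain ⟨q, ⟨hch, hx, hy, hP⟩, hmin⟩ := (InvImage.wf List.length wellFounded_lt).has_min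
    {q | List.IsChain r q ∧ q.head? = some x ∧ q.getLast? = some y ∧ ∀ z ∈ q, P z}
    ⟨p, hch, hx, hy, hP⟩
  refine ⟨q, hch, hx, hy, hP, fun k l hl hkl hr =>
    hmin (q.take (k + 1) ++ q.drop l) ⟨?_, ?_, ?_, ?_⟩ ?_⟩
  · refine List.isChain_append.2 ⟨hch.take _, hch.drop _, fun u hu v hv => ?_⟩
    have hk : k < q.length := by omega
    simp only [List.getLast?_take, List.head?_drop, List.getElem?_eq_getElem hl] at hu hv
    simp only [Nat.add_eq_zero_iff, one_ne_zero, and_false, if_false, Nat.add_sub_cancel,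
      List.getElem?_eq_getElem hk, Option.some_or, Option.mem_def, Option.some.injEq] at hu hv
    exact hu ▸ hv ▸ hr
  · simp [List.head?_append, List.head?_take, hx]
  · simp [List.getLast?_append, List.getLast?_drop, Nat.not_le.2 hl, hy]
  · simp only [List.mem_append]
    exact fun z hz => hP z (hz.elim List.mem_of_mem_take List.mem_of_mem_drop)
  · show (q.take (k + 1) ++ q.drop l).length < q.length
    simp only [List.length_append, List.length_take, List.length_drop]
    omega

end Chordless

namespace MixedGraph

variable {V : Type*} {G D : MixedGraph V} {C : Set V} {i j a b c : V} {p l₁ l₂ : List V}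

theorem adj_irrefl (G : MixedGraph V) (i : V) : ¬ G.adj i i := by
  rintro (h | h | h | h)
  exacts [G.line_irrefl i h, G.arrow_irrefl i h, G.arrow_irrefl i h, G.arc_irrefl i h]

theorem adj_symm (G : MixedGraph V) : G.adj i j → G.adj j i := by
  rintro (h | h | h | h)
  exacts [Or.inl (G.line_symm _ _ h), Or.inr (Or.inr (Or.inl h)), Or.inr (Or.inl h),
    Or.inr (Or.inr (Or.inr (G.arc_symm _ _ h)))]

theorem ne_of_adj (h : G.adj i j) : i ≠ j := fun e => G.adj_irrefl j (e ▸ h)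

theorem adj_of_headAt : G.headAt i j → G.adj i j :=
  Or.rec (fun h => Or.inr (Or.inl h)) fun h => Or.inr (Or.inr (Or.inr h))

def skeleton (G : MixedGraph V) : SimpleGraph V where
  Adj := G.adj
  symm := ⟨fun _ _ => G.adj_symm⟩
  loopless := ⟨G.adj_irrefl⟩

theorem sameSkeleton.adj_eq (h : G.sameSkeleton D) : G.adj = D.adj :=
  funext₂ fun i j => propext (h i j)

theorem isUG.not_collider (hG : G.isUG) : ¬ G.collider a b c := by
  rintro ⟨h | h, -⟩
  exacts [hG.1 _ _ h, hG.2 _ _ h]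

theorem isDAG.arrow_or_arrow (hD : D.isDAG) : D.adj i j → D.arrow i j ∨ D.arrow j i := by
  rintro (h | h | h | h)
  exacts [(hD.1 _ _ h).elim, Or.inl h, Or.inr h, (hD.2.1 _ _ h).elim]

theorem isDAG.arrow_of_headAt (hD : D.isDAG) : D.headAt i j → D.arrow i j :=
  Or.rec id fun h => (hD.2.1 _ _ h).elim

theorem isDAG.arrow_asymm (hD : D.isDAG) (h : D.arrow i j) : ¬ D.arrow j i :=
  fun h' => hD.2.2 i (.head h (.single h'))

theorem isDAG.exists_sink (hD : D.isDAG) {s : Set V} (hs : s.Finite) (hne : s.Nonempty) :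
    ∃ m ∈ s, ∀ x ∈ s, ¬ D.arrow m x := by
  have : IsStrictOrder V fun x y => Relation.TransGen D.arrow y x :=
    { irrefl := hD.2.2, trans := fun _ _ _ h₁ h₂ => h₂.trans h₁ }
  obtain ⟨⟨m, hm⟩, -, hmin⟩ :=
    (hs.wellFoundedOn (r := fun x y => Relation.TransGen D.arrow y x)).has_min Set.univ
    ⟨⟨_, hne.some_mem⟩, trivial⟩
  exact ⟨m, hm, fun x hx h => hmin ⟨x, hx⟩ trivial (.single h)⟩

/-- `G.innerOK C (a :: b :: c :: l)` unfolds to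
`G.innerOKAt C a b c ∧ G.innerOK C (b :: c :: l)`. -/
def innerOKAt (G : MixedGraph V) (C : Set V) (a b c : V) : Prop :=
  (G.collider a b c → b ∈ C ∨ ∃ x ∈ C, G.anc b x) ∧ (¬ G.collider a b c → b ∉ C)

theorem innerOKAt_iff_of_not_collider (h : ¬ G.collider a b c) :
    G.innerOKAt C a b c ↔ b ∉ C :=
  ⟨fun h' => h'.2 h, fun hb => ⟨fun hc => (h hc).elim, fun _ => hb⟩⟩

theorem innerOK.of_cons : ∀ {l : List V}, G.innerOK C (a :: l) → G.innerOK C l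
  | [], _ | [_], _ => trivial
  | _ :: _ :: _, h => h.2

theorem innerOK.innerOKAt :
    ∀ {l₁ : List V}, G.innerOK C (l₁ ++ a :: b :: c :: l₂) → G.innerOKAt C a b c
  | [], h => h.1
  | _ :: _, h => innerOK.innerOKAt (innerOK.of_cons h)

theorem innerOK.erase
    (hleft : ∀ z, G.innerOKAt C z a b → G.innerOKAt C a b c → G.innerOKAt C z a c)
    (hright : ∀ d, G.innerOKAt C a b c → G.innerOKAt C b c d → G.innerOKAt C a c d) :
    ∀ {l₁ : List V},
      G.innerOK C (l₁ ++ a :: b :: c :: l₂) → G.innerOK C (l₁ ++ a :: c :: l₂)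
  | [], h => match l₂, h with
    | [], _ => trivial
    | d :: _, ⟨habc, hbcd, h⟩ => ⟨hright d habc hbcd, h⟩
  | [z], ⟨hzab, h⟩ => ⟨hleft z hzab h.1, innerOK.erase hleft hright (l₁ := []) h⟩
  | [_, z], ⟨hyza, h⟩ => ⟨hyza, innerOK.erase hleft hright (l₁ := [z]) h⟩
  | _ :: z :: w :: l, ⟨hyzw, h⟩ =>
    ⟨hyzw, innerOK.erase hleft hright (l₁ := z :: w :: l) h⟩

theorem mConnecting_pair (h : G.adj i j) : G.mConnecting C i j [i, j] :=
  ⟨⟨by simpa using ne_of_adj h, List.isChain_pair.2 h⟩, le_rfl, rfl, rfl, trivial⟩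

theorem not_mSep_of_adj (h : G.adj i j) : ¬ G.mSep {i} {j} C :=
  fun hs => hs ⟨i, j, _, rfl, rfl, mConnecting_pair h⟩

theorem mConnecting.exists_eq_cons_cons_cons (h : G.mConnecting C i j p) (hna : ¬ G.adj i j) :
    ∃ b c r, p = i :: b :: c :: r ∧ j ∈ c :: r := by
  obtain ⟨⟨-, hch⟩, hlen, hh, hl, -⟩ := h
  match p, hch, hlen, hh, hl with
  | [a, b], hch, _, hh, hl =>
    obtain ⟨rfl, rfl⟩ : a = i ∧ b = j := ⟨by simpa using hh, by simpa using hl⟩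
    exact (hna (List.isChain_pair.1 hch)).elim
  | _ :: b :: c :: r, _, _, hh, hl =>
    exact ⟨b, c, r, by simp_all, List.mem_of_getLast? (by simpa using hl)⟩

theorem isUG.mSep (hG : G.isUG) (h : ¬ G.adj i j) : G.mSep {i} {j} {v | v ≠ i ∧ v ≠ j} := by
  rintro ⟨i', j', p, hi', hj', hp⟩
  rw [Set.mem_singleton_iff] at hi' hj'
  subst i' j'
  obtain ⟨b, c, r, rfl, hj⟩ := hp.exists_eq_cons_cons_cons h
  obtain ⟨hi, hnd⟩ := List.nodup_cons.1 hp.1.1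
  exact hp.2.2.2.2.1.2 hG.not_collider
    ⟨fun e => hi (e ▸ List.mem_cons_self ..), fun e => (List.nodup_cons.1 hnd).1 (e ▸ hj)⟩

theorem isUG.isMaximal (hG : G.isUG) : G.isMaximal :=
  fun _ _ _ h => ⟨_, fun hi => hi.1 rfl, fun hj => hj.2 rfl, hG.mSep h⟩

theorem isDAG.forall_mem_of_innerOK (hD : D.isDAG) {A : Set V}
    (hA : ∀ x y, D.arrow x y → y ∈ A → x ∈ A) (hCA : C ⊆ A) (hch : List.IsChain D.adj p)
    (hok : D.innerOK C p) (hh : ∀ x ∈ p.head?, x ∈ A) (hl : ∀ x ∈ p.getLast?, x ∈ A) :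
    ∀ x ∈ p, x ∈ A := by
  have hanc : ∀ {x y}, D.anc x y → y ∈ A → x ∈ A := fun hxy hy => by
    induction hxy using Relation.ReflTransGen.head_induction_on with
    | refl => exact hy
    | head hxz _ ih => exact hA _ _ hxz ih
  by_contra! hout
  -- a sink among the nodes outside `A` has an outgoing edge along the path, to a node outside `A`
  obtain ⟨m, ⟨hmp, hmA⟩, hsink⟩ := hD.exists_sink (s := {x | x ∈ p ∧ x ∉ A})
    ((List.finite_toSet p).subset fun _ hx => hx.1) hout
  obtain ⟨l₁, a, c, l₂, rfl⟩ := List.exists_eq_append_cons_cons_cons hmp (fun h => hmA (hh m h))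
    (fun h => hmA (hl m h))
  obtain ⟨-, ham, hmc⟩ := List.isChain_append_cons_cons.1 hch
  have hmc : D.adj m c := (List.isChain_cons_cons.1 hmc).1
  have hout_of_arrow : ∀ x ∈ l₁ ++ a :: m :: c :: l₂, D.arrow m x → False :=
    fun x hx hmx => hsink x ⟨hx, fun hxA => hmA (hA m x hmx hxA)⟩ hmx
  by_cases hcol : D.collider a m c
  · refine hmA ?_
    rcases hok.innerOKAt.1 hcol with hmC | ⟨x, hxC, hmx⟩
    exacts [hCA hmC, hanc hmx (hCA hxC)]
  · simp only [collider, not_and_or] at hcol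
    rcases hcol with hna | hnc
    · refine hout_of_arrow a (by simp) ((hD.arrow_or_arrow ham).resolve_left fun h => hna ?_)
      exact Or.inl h
    · refine hout_of_arrow c (by simp) ((hD.arrow_or_arrow hmc).resolve_right fun h => hnc ?_)
      exact Or.inl h

theorem isDAG.mSep (hD : D.isDAG) (h : ¬ D.adj i j) :
    D.mSep {i} {j} {v | (D.anc v i ∨ D.anc v j) ∧ v ≠ i ∧ v ≠ j} := by
  rintro ⟨i', j', p, hi', hj', hp⟩
  rw [Set.mem_singleton_iff] at hi' hj'
  subst i' j'
  have hA := hD.forall_mem_of_innerOK (A := {v | D.anc v i ∨ D.anc v j})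
    (fun x y hxy => Or.imp (.head hxy) (.head hxy)) (fun _ hv => hv.1) hp.1.2 hp.2.2.2.2
    (by simpa [hp.2.2.1] using Or.inl .refl) (by simpa [hp.2.2.2.1] using Or.inr .refl)
  obtain ⟨b, c, r, rfl, hj⟩ := hp.exists_eq_cons_cons_cons h
  obtain ⟨⟨hnd, -⟩, -, -, hl, hok⟩ := hp
  obtain ⟨hi, hnd⟩ := List.nodup_cons.1 hnd
  obtain ⟨hb, hnd⟩ := List.nodup_cons.1 hnd
  -- the inner nodes lie in `A` and differ from `i` and `j`, so they must all be colliders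
  have hbcol : D.collider i b c := by
    by_contra hnc
    exact hok.1.2 hnc ⟨hA b (by simp), fun e => hi (e ▸ List.mem_cons_self ..),
      fun e => hb (e ▸ hj)⟩
  have hib := hD.arrow_of_headAt hbcol.1
  have hcb := hD.arrow_of_headAt hbcol.2
  match r, hl, hnd, hok with
  | [], hl, _, _ =>
    obtain rfl : c = j := by simpa using hl
    rcases hA b (by simp) with hbi | hbj
    · exact hD.2.2 i (.head' hib hbi)
    · exact hD.2.2 c (.head' hcb hbj)
  | d :: r, hl, hnd, hok =>
    have hj : j ∈ d :: r := List.mem_of_getLast? (by simpa using hl)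
    have hccol : D.collider b c d := by
      by_contra hnc
      exact hok.2.1.2 hnc ⟨hA c (by simp), fun e => hi (e ▸ by simp),
        fun e => (List.nodup_cons.1 hnd).1 (e ▸ hj)⟩
    exact hD.arrow_asymm hcb (hD.arrow_of_headAt hccol.1)

theorem isDAG.isMaximal (hD : D.isDAG) : D.isMaximal :=
  fun _ _ _ h => ⟨_, fun hi => hi.2.1 rfl, fun hj => hj.2.2 rfl, hD.mSep h⟩

theorem markovEquiv.symm (h : G.markovEquiv D) : D.markovEquiv G :=
  fun A B C hAB hAC hBC => (h A B C hAB hAC hBC).symm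

theorem markovEquiv.mSep_iff (h : G.markovEquiv D) (hij : i ≠ j) (hi : i ∉ C) (hj : j ∉ C) :
    G.mSep {i} {j} C ↔ D.mSep {i} {j} C :=
  h _ _ _ (Set.disjoint_singleton.2 hij) (Set.disjoint_singleton_left.2 hi)
    (Set.disjoint_singleton_left.2 hj)

theorem markovEquiv.adj_of_adj (h : G.markovEquiv D) (hG : G.isMaximal) (hadj : D.adj i j) :
    G.adj i j := by
  by_contra hna
  obtain ⟨C, hi, hj, hsep⟩ := hG i j (ne_of_adj hadj) hna
  exact not_mSep_of_adj hadj ((h.mSep_iff (ne_of_adj hadj) hi hj).1 hsep)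

theorem markovEquiv.sameSkeleton (h : G.markovEquiv D) (hG : G.isMaximal) (hD : D.isMaximal) :
    G.sameSkeleton D :=
  fun _ _ => ⟨h.symm.adj_of_adj hD, h.adj_of_adj hG⟩

theorem isUG.not_unshieldedCollider (hG : G.isUG) (h : G.markovEquiv D) (hskel : G.sameSkeleton D)
    (a b c : V) : ¬ D.unshieldedCollider a b c := by
  rintro ⟨hcol, hac, hna⟩
  have hab := adj_of_headAt hcol.1
  have hcb := adj_of_headAt hcol.2
  refine (h.mSep_iff hac (fun h => h.1 rfl) (fun h => h.2 rfl)).1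
    (hG.mSep fun h' => hna ((hskel a c).1 h')) ⟨a, c, [a, b, c], rfl, rfl, ?_⟩
  have hba := (ne_of_adj hab).symm
  have hbc := (ne_of_adj hcb).symm
  refine ⟨⟨by simp [hba.symm, hac, hbc],
    List.isChain_cons_cons.2 ⟨hab, List.isChain_pair.2 (D.adj_symm hcb)⟩⟩, by simp, rfl, rfl,
    ⟨fun _ => Or.inl ⟨hba, hbc⟩, fun hnc => (hnc hcol).elim⟩, trivial⟩

def colliderFree (G : MixedGraph V) (p : List V) : Prop :=
  ∀ l₁ a b c l₂, p = l₁ ++ a :: b :: c :: l₂ → ¬ G.collider a b c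

theorem colliderFree.tail (h : G.colliderFree (a :: p)) : G.colliderFree p :=
  fun l₁ x y z l₂ e => h (a :: l₁) x y z l₂ (by rw [e]; rfl)

theorem isUG.colliderFree (hG : G.isUG) (p : List V) : G.colliderFree p :=
  fun _ _ _ _ _ _ => hG.not_collider

theorem innerOK_iff_of_colliderFree :
    ∀ {p : List V}, G.colliderFree p → D.colliderFree p → (G.innerOK C p ↔ D.innerOK C p)
  | [], _, _ | [_], _, _ | [_, _], _, _ => Iff.rfl
  | a :: b :: c :: l, hG, hD =>
    and_congr ((innerOKAt_iff_of_not_collider (hG [] a b c l rfl)).trans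
        (innerOKAt_iff_of_not_collider (hD [] a b c l rfl)).symm)
      (innerOK_iff_of_colliderFree hG.tail hD.tail)

theorem mConnecting_iff_of_colliderFree (hskel : G.sameSkeleton D) (hG : G.colliderFree p)
    (hD : D.colliderFree p) : G.mConnecting C i j p ↔ D.mConnecting C i j p := by
  simp only [mConnecting, isPath, hskel.adj_eq, innerOK_iff_of_colliderFree hG hD]

theorem exists_colliderFree (P : List V → Prop)
    (hP : ∀ l₁ a b c l₂, D.collider a b c →
      P (l₁ ++ a :: b :: c :: l₂) → P (l₁ ++ a :: c :: l₂)) :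
    ∀ p, P p → ∃ q, P q ∧ D.colliderFree q := by
  intro p hp
  induction h : p.length using Nat.strong_induction_on generalizing p with
  | _ n ih =>
    by_cases hfree : D.colliderFree p
    · exact ⟨p, hp, hfree⟩
    · simp only [colliderFree, not_forall, not_not] at hfree
      obtain ⟨l₁, a, b, c, l₂, rfl, hcol⟩ := hfree
      exact ih _ (by simp [← h]) _ (hP l₁ a b c l₂ hcol hp) rfl

theorem mConnecting.erase (h : G.mConnecting C i j (l₁ ++ a :: b :: c :: l₂))
    (hac : G.adj a c) (hok : G.innerOK C (l₁ ++ a :: c :: l₂)) :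
    G.mConnecting C i j (l₁ ++ a :: c :: l₂) := by
  obtain ⟨⟨hnd, hch⟩, -, hh, hl, -⟩ := h
  obtain ⟨hch₁, -, hch₂⟩ := List.isChain_append_cons_cons.1 hch
  refine ⟨⟨hnd.sublist ((List.sublist_cons_self b _).cons_cons a |>.append_left l₁),
    List.isChain_append_cons_cons.2 ⟨hch₁, hac, hch₂.tail⟩⟩, by simp; omega, ?_, ?_, hok⟩
  · simpa [List.head?_append] using hh
  · simpa [List.getLast?_append] using hl

theorem mConnecting.ne_of_append (h : G.mConnecting C i j (l₁ ++ a :: b :: c :: l₂)) :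
    a ≠ c := by
  rintro rfl
  simpa [List.nodup_append] using h.1.1

theorem isDAG.innerOK_erase (hD : D.isDAG) (hcol : D.collider a b c)
    (h : D.innerOK C (l₁ ++ a :: b :: c :: l₂)) : D.innerOK C (l₁ ++ a :: c :: l₂) := by
  have hab := hD.arrow_of_headAt hcol.1
  have hcb := hD.arrow_of_headAt hcol.2
  -- `a` and `c` point into `b`, which is in `C` or an ancestor of `C`; as tails they are not in `C`
  have hb := h.innerOKAt.1 hcol
  have hanc : ∀ {y}, D.arrow y b → ∃ x ∈ C, D.anc y x := fun hyb =>
    hb.elim (fun hbC => ⟨b, hbC, .single hyb⟩) fun ⟨x, hx, hbx⟩ => ⟨x, hx, .head hyb hbx⟩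
  refine h.erase (fun z hz _ => ⟨fun _ => Or.inr (hanc hab), fun _ => hz.2 ?_⟩)
    (fun d _ hd => ⟨fun _ => Or.inr (hanc hcb), fun _ => hd.2 ?_⟩)
  · exact fun hc => hD.arrow_asymm hab (hD.arrow_of_headAt hc.2)
  · exact fun hc => hD.arrow_asymm hcb (hD.arrow_of_headAt hc.1)

theorem isUG.innerOK_erase (hG : G.isUG) (h : G.innerOK C (l₁ ++ a :: b :: c :: l₂)) :
    G.innerOK C (l₁ ++ a :: c :: l₂) := by
  have hiff : ∀ {x y z}, G.innerOKAt C x y z ↔ y ∉ C :=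
    innerOKAt_iff_of_not_collider hG.not_collider
  exact h.erase (fun _ hz _ => hiff.2 (hiff.1 hz)) (fun _ _ hd => hiff.2 (hiff.1 hd))

theorem isUG.markovEquiv (hG : G.isUG) (hD : D.isDAG) (hskel : G.sameSkeleton D)
    (hsh : ∀ a b c, ¬ D.unshieldedCollider a b c) : G.markovEquiv D := by
  have hshield : ∀ {a b c}, D.collider a b c → a ≠ c → D.adj a c :=
    fun {a b c} hcol hac => by_contra fun hna => hsh a b c ⟨hcol, hac, hna⟩
  intro A B C _ _ _
  refine not_congr ⟨?_, ?_⟩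
  · rintro ⟨i, j, p, hi, hj, hp⟩
    obtain ⟨q, hq, hfree⟩ := exists_colliderFree (G.mConnecting C i j)
      (fun _ _ _ _ _ hcol h => h.erase ((hskel _ _).2 (hshield hcol h.ne_of_append))
        (hG.innerOK_erase h.2.2.2.2)) p hp
    exact ⟨i, j, q, hi, hj,
      (mConnecting_iff_of_colliderFree hskel (hG.colliderFree q) hfree).1 hq⟩
  · rintro ⟨i, j, p, hi, hj, hp⟩
    obtain ⟨q, hq, hfree⟩ := exists_colliderFree (D.mConnecting C i j)
      (fun _ _ _ _ _ hcol h => h.erase (hshield hcol h.ne_of_append)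
        (hD.innerOK_erase hcol h.2.2.2.2)) p hp
    exact ⟨i, j, q, hi, hj,
      (mConnecting_iff_of_colliderFree hskel (hG.colliderFree q) hfree).2 hq⟩

/-- The two cycle neighbours of a sink of a chordless cycle form an unshielded collider. -/
theorem isDAG.chordalRel (hD : D.isDAG) (h : ∀ a b c, ¬ D.unshieldedCollider a b c) :
    chordalRel D.adj := by
  rintro ⟨p, hp⟩
  have hlen := hp.1
  obtain ⟨m, hm, hsink⟩ := hD.exists_sink (List.finite_toSet p) ⟨p[0], List.getElem_mem _⟩
  obtain ⟨u, hu, v, hv, hum, hvm, huv, hna⟩ :=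
    hp.exists_nonadj_neighbors (fun _ _ => D.adj_symm) hm
  have hin : ∀ x ∈ p, D.adj x m → D.arrow x m :=
    fun x hx hxm => (hD.arrow_or_arrow hxm).resolve_right (hsink x hx)
  exact h u m v ⟨⟨Or.inl (hin u hu hum), Or.inl (hin v hv hvm)⟩, huv, hna⟩

end MixedGraph

namespace SimpleGraph

variable {V : Type*} {H : SimpleGraph V}

theorem chordlessCycleList_concat {q : List V} {b c d : V} (hch : List.IsChain H.Adj q)
    (hc : q.head? = some c) (hd : q.getLast? = some d) (hq : chordlessList H.Adj q)
    (hcd : c ≠ d) (hna : ¬ H.Adj c d) (hbc : H.Adj b c) (hbd : H.Adj b d)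
    (hinner : ∀ z ∈ q, z ≠ c → z ≠ d → z ≠ b ∧ ¬ H.Adj z b) :
    chordlessCycleList H.Adj (q ++ [b]) := by
  have hnd : q.Nodup := hq.nodup (fun _ => H.irrefl) hch (by rw [hc, hd]; simpa)
  have hlen : 3 ≤ q.length := by
    match q, hch, hc, hd with
    | [x], _, hc, hd => simp_all
    | [x, y], hch, hc, hd => simp_all
    | _ :: _ :: _ :: _, _, _, _ => simp
  have hc0 : q[0] = c := by
    simpa [List.head?_eq_getElem?, List.getElem?_eq_getElem (show 0 < q.length by omega)] using hc
  have hdl : q[q.length - 1] = d := by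
    simpa [List.getLast?_eq_getElem?,
      List.getElem?_eq_getElem (show q.length - 1 < q.length by omega)] using hd
  have hbq : b ∉ q := fun hb => by
    by_cases hbc' : b = c
    · exact H.irrefl (hbc' ▸ hbc)
    by_cases hbd' : b = d
    · exact H.irrefl (hbd' ▸ hbd)
    exact (hinner b hb hbc' hbd').1 rfl
  refine ⟨by simp; omega, List.nodup_append.2 ⟨hnd, by simp, fun z hz _ he hzb => hbq ?_⟩,
    List.isChain_append.2 ⟨hch, by simp, by simpa [hd] using hbd.symm⟩,
    by simpa [List.head?_append, hc] using hbc, ?_⟩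
  · simp_all
  intro k l x y hkl hl hwrap hx hy
  rw [List.length_append, List.length_singleton] at hl hwrap
  rw [List.getElem?_append_left (by omega),
    List.getElem?_eq_getElem (show k < q.length by omega), Option.some_inj] at hx
  subst hx
  rcases Nat.lt_or_ge l q.length with hl' | hl'
  · rw [List.getElem?_append_left hl', List.getElem?_eq_getElem hl', Option.some_inj] at hy
    exact hy ▸ hq k l hl' hkl
  · obtain rfl : l = q.length := by omega
    rw [List.getElem?_concat_length, Option.some_inj] at hy
    subst hy
    refine (hinner _ (List.getElem_mem _) (fun e => ?_) (fun e => ?_)).2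
    · have := hnd.getElem_inj_iff.1 (e.trans hc0.symm)
      omega
    · have := hnd.getElem_inj_iff.1 (e.trans hdl.symm)
      omega

/-- Otherwise a shortest path from `c` to `d` through `T`, closed up through `b`, is a chordless
cycle. -/
theorem adj_of_chordalRel (hH : chordalRel H.Adj) {T : Set V} {b c d y₁ y₂ : V}
    (hT : ∀ z ∈ T, z ≠ b ∧ ¬ H.Adj z b)
    (hy : Relation.ReflTransGen (fun u w => H.Adj u w ∧ u ∈ T ∧ w ∈ T) y₁ y₂) (hy₁ : y₁ ∈ T)
    (hcy : H.Adj c y₁) (hdy : H.Adj d y₂) (hbc : H.Adj b c) (hbd : H.Adj b d) (hcd : c ≠ d) :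
    H.Adj c d := by
  by_contra hna
  obtain ⟨l, hl, hlast⟩ := List.exists_isChain_cons_of_relationReflTransGen hy
  have hlT := hl.induction (· ∈ T) _ (fun _ _ h _ => h.2.2) fun _ => hy₁
  have hch : List.IsChain H.Adj (c :: (y₁ :: l) ++ [d]) := by
    refine List.isChain_append.2
      ⟨List.isChain_cons.2 ⟨by simpa using hcy, hl.imp fun _ _ h => h.1⟩, by simp, ?_⟩
    simpa only [List.getLast?_cons_cons, List.getLast?_eq_some_getLast (List.cons_ne_nil y₁ l),
      hlast, List.head?_cons, Option.mem_def, Option.some.injEq, forall_eq'] using hdy.symm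
  obtain ⟨q, hch, hc, hd, hP, hq⟩ :=
    exists_chordlessList (P := fun z => z = c ∨ z = d ∨ z ∈ T) (x := c) (y := d) hch rfl
      List.getLast?_concat fun z hz => by
        rcases List.mem_append.1 hz with hz | hz
        · rcases List.mem_cons.1 hz with rfl | hz
          exacts [Or.inl rfl, Or.inr (Or.inr (hlT z hz))]
        · exact Or.inr (Or.inl (List.mem_singleton.1 hz))
  exact hH ⟨_, chordlessCycleList_concat hch hc hd hq hcd hna hbc hbd
    fun z hz hzc hzd => hT z (((hP z hz).resolve_left hzc).resolve_left hzd)⟩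

def IsSimplicial (H : SimpleGraph V) (s : Set V) (v : V) : Prop :=
  H.IsClique (s ∩ H.neighborSet v)

/-- Dirac's lemma, strengthened so that the induction goes through. Let `K` be the component of
`a` in `s` minus the closed neighbourhood of `b`. The neighbours of `K` outside `K` are neighbours
of `b`, hence form a clique; so of two non-adjacent simplicial vertices of `K` together with its
neighbours, a set that misses `b`, one lies in `K`. -/
theorem exists_isSimplicial_not_adj (hH : chordalRel H.Adj) (s : Finset V) {a b : V}
    (ha : a ∈ s) (hb : b ∈ s) (hab : a ≠ b) (hna : ¬ H.Adj a b) :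
    ∃ v ∈ s, v ≠ b ∧ ¬ H.Adj v b ∧ H.IsSimplicial s v := by
  classical
  induction s using Finset.strongInduction generalizing a b with
  | H s ih =>
  let T : Set V := {x | x ∈ s ∧ x ≠ b ∧ ¬ H.Adj x b}
  let R : V → V → Prop := fun u w => H.Adj u w ∧ u ∈ T ∧ w ∈ T
  let K : Set V := {x | Relation.ReflTransGen R a x}
  let s' : Finset V := s.filter fun x => x ∈ K ∨ ∃ y ∈ K, H.Adj y x
  have hKT : ∀ {x}, x ∈ K → x ∈ T := fun hx => by
    rcases hx.cases_tail with rfl | ⟨_, _, h⟩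
    exacts [⟨ha, hab, hna⟩, h.2.2]
  have hsimp : ∀ {v}, v ∈ K → H.IsSimplicial s' v → H.IsSimplicial s v := fun hv h =>
    IsClique.subset (s := (s' : Set V) ∩ H.neighborSet _) (t := (s : Set V) ∩ H.neighborSet _)
      (fun x hx => ⟨Finset.mem_filter.2 ⟨hx.1, Or.inr ⟨_, hv, hx.2⟩⟩, hx.2⟩) h
  have hout : ∀ {x}, x ∈ s' → x ∉ K → (∃ y ∈ K, H.Adj y x) ∧ H.Adj x b := by
    intro x hx hxK
    obtain ⟨hxs, hx | ⟨y, hyK, hyx⟩⟩ := Finset.mem_filter.1 hx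
    · exact (hxK hx).elim
    refine ⟨⟨y, hyK, hyx⟩, by_contra fun hxb =>
      hxK (.tail hyK (show R y x from ⟨hyx, hKT hyK, hxs, ?_, hxb⟩))⟩
    rintro rfl
    exact (hKT hyK).2.2 hyx
  have hss : s' ⊂ s := by
    refine Finset.filter_ssubset.2 ⟨b, hb, ?_⟩
    rintro (hbK | ⟨y, hyK, hyb⟩)
    exacts [(hKT hbK).2.1 rfl, (hKT hyK).2.2 hyb]
  have hclique : H.IsClique {x | x ∈ s' ∧ x ∉ K} := by
    rintro c ⟨hc, hcK⟩ d ⟨hd, hdK⟩ hcd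
    obtain ⟨⟨y₁, hy₁, hy₁c⟩, hcb⟩ := hout hc hcK
    obtain ⟨⟨y₂, hy₂, hy₂d⟩, hdb⟩ := hout hd hdK
    have : Std.Symm R := ⟨fun _ _ h => ⟨h.1.symm, h.2.2, h.2.1⟩⟩
    exact adj_of_chordalRel hH (fun _ hz => hz.2) ((Std.Symm.symm _ _ hy₁).trans hy₂) (hKT hy₁)
      hy₁c.symm hy₂d.symm hcb.symm hdb.symm hcd
  by_cases hs' : H.IsClique (s' : Set V)
  · exact ⟨a, ha, hab, hna, hsimp .refl (hs'.subset Set.inter_subset_left)⟩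
  obtain ⟨a', ha', b', hb', hab', hna'⟩ : ∃ a' ∈ s', ∃ b' ∈ s', a' ≠ b' ∧ ¬ H.Adj a' b' := by
    simpa [IsClique, Set.Pairwise] using hs'
  obtain ⟨v, hv, hvb', hnvb', hvs⟩ := ih s' hss ha' hb' hab' hna'
  obtain ⟨w, hw, hwv, hnwv, hws⟩ := ih s' hss hb' hv (Ne.symm hvb') fun h => hnvb' h.symm
  have hvw : v ∈ K ∨ w ∈ K := by
    by_contra! h
    exact hnwv (hclique ⟨hw, h.2⟩ ⟨hv, h.1⟩ hwv)
  rcases hvw with hvK | hwK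
  · exact ⟨v, (hKT hvK).1, (hKT hvK).2.1, (hKT hvK).2.2, hsimp hvK hvs⟩
  · exact ⟨w, (hKT hwK).1, (hKT hwK).2.1, (hKT hwK).2.2, hsimp hwK hws⟩

theorem exists_isSimplicial (hH : chordalRel H.Adj) {s : Finset V} (hs : s.Nonempty) :
    ∃ v ∈ s, H.IsSimplicial s v := by
  by_cases hcl : H.IsClique (s : Set V)
  · obtain ⟨v, hv⟩ := hs
    exact ⟨v, hv, hcl.subset Set.inter_subset_left⟩
  · obtain ⟨a, ha, b, hb, hab, hna⟩ : ∃ a ∈ s, ∃ b ∈ s, a ≠ b ∧ ¬ H.Adj a b := by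
      simpa [IsClique, Set.Pairwise] using hcl
    obtain ⟨v, hv, -, -, hsimp⟩ := exists_isSimplicial_not_adj hH s ha hb hab hna
    exact ⟨v, hv, hsimp⟩

/-- Vertices are eliminated in decreasing order of `f`, each being simplicial among the
remaining ones. -/
theorem exists_perfectEliminationOrder (hH : chordalRel H.Adj) (s : Finset V) :
    ∃ f : V → ℕ, Set.InjOn f s ∧ ∀ z ∈ s, H.IsClique {x | x ∈ s ∧ H.Adj z x ∧ f x < f z} := by
  classical
  induction s using Finset.strongInduction with
  | H s ih =>
  rcases s.eq_empty_or_nonempty with rfl | hs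
  · exact ⟨fun _ => 0, by simp, by simp⟩
  obtain ⟨v, hv, hsimp⟩ := exists_isSimplicial hH hs
  obtain ⟨f, hinj, hf⟩ := ih _ (Finset.erase_ssubset hv)
  have hlt : ∀ x ∈ s.erase v, f x < (s.erase v).sup f + 1 :=
    fun x hx => Nat.lt_succ_of_le (Finset.le_sup hx)
  refine ⟨Function.update f v ((s.erase v).sup f + 1), fun x hx y hy hxy => ?_, fun z hz => ?_⟩
  · by_cases hxv : x = v <;> by_cases hyv : y = v
    · exact hxv.trans hyv.symm
    all_goals simp only [Function.update_apply, hxv, hyv, if_true, if_false] at hxy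
    · exact absurd hxy (hlt y (Finset.mem_erase.2 ⟨hyv, hy⟩)).ne'
    · exact absurd hxy (hlt x (Finset.mem_erase.2 ⟨hxv, hx⟩)).ne
    · exact hinj (Finset.mem_erase.2 ⟨hxv, hx⟩) (Finset.mem_erase.2 ⟨hyv, hy⟩) hxy
  by_cases hzv : z = v
  · subst hzv
    exact IsClique.subset (s := (s : Set V) ∩ H.neighborSet _) (fun x hx => ⟨hx.1, hx.2.1⟩) hsimp
  · refine (hf z (Finset.mem_erase.2 ⟨hzv, hz⟩)).subset fun x ⟨hx, hzx, hfx⟩ => ?_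
    have hxv : x ≠ v := by
      rintro rfl
      simp only [Function.update_self, Function.update_of_ne hzv] at hfx
      exact (hlt z (Finset.mem_erase.2 ⟨hzv, hz⟩)).not_gt hfx
    simp only [Function.update_of_ne hxv, Function.update_of_ne hzv] at hfx
    exact ⟨Finset.mem_erase.2 ⟨hxv, hx⟩, hzx, hfx⟩

def orient (H : SimpleGraph V) (f : V → ℕ) : MixedGraph V where
  line _ _ := False
  arrow x y := H.Adj x y ∧ f x < f y
  arc _ _ := False
  line_symm _ _ := id
  arc_symm _ _ := id
  line_irrefl _ := id
  arrow_irrefl _ h := lt_irrefl _ h.2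
  arc_irrefl _ := id

theorem orient_isDAG (f : V → ℕ) : (H.orient f).isDAG := by
  have hlt : ∀ {x y}, Relation.TransGen (H.orient f).arrow x y → f x < f y := fun h => by
    induction h with
    | single h => exact h.2
    | tail _ h ih => exact ih.trans h.2
  exact ⟨fun _ _ => id, fun _ _ => id, fun x hx => lt_irrefl (f x) (hlt hx)⟩

theorem orient_adj {f : V → ℕ} (hf : Function.Injective f) {x y : V} :
    (H.orient f).adj x y ↔ H.Adj x y := by
  refine ⟨?_, fun h => ?_⟩
  · rintro (h | h | h | h)
    exacts [h.elim, h.1, h.1.symm, h.elim]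
  · rcases lt_trichotomy (f x) (f y) with hlt | heq | hgt
    · exact Or.inr (Or.inl ⟨h, hlt⟩)
    · exact (H.ne_of_adj h (hf heq)).elim
    · exact Or.inr (Or.inr (Or.inl ⟨h.symm, hgt⟩))

theorem orient_not_unshieldedCollider {f : V → ℕ} (hf : Function.Injective f)
    (hpeo : ∀ z, H.IsClique {x | H.Adj z x ∧ f x < f z}) (a b c : V) :
    ¬ (H.orient f).unshieldedCollider a b c := by
  rintro ⟨⟨⟨hab, hfab⟩ | h, ⟨hcb, hfcb⟩ | h⟩, hac, hna⟩
  · exact hna ((orient_adj hf).2 (hpeo b ⟨hab.symm, hfab⟩ ⟨hcb.symm, hfcb⟩ hac))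
  all_goals exact h.elim

end SimpleGraph

/-- An undirected graph is Markov equivalent to some DAG iff it is chordal. -/
theorem ug_equiv_some_dag_iff_chordal {V : Type*} [Fintype V] (G : MixedGraph V)
    (hG : G.isUG) :
    (∃ D : MixedGraph V, D.isDAG ∧ G.markovEquiv D) ↔ chordalRel G.adj := by
  constructor
  · rintro ⟨D, hD, hGD⟩
    have hskel := hGD.sameSkeleton hG.isMaximal hD.isMaximal
    rw [hskel.adj_eq]
    exact hD.chordalRel (hG.not_unshieldedCollider hGD hskel)
  · intro hH
    obtain ⟨f, hinj, hpeo⟩ := G.skeleton.exists_perfectEliminationOrder hH Finset.univ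
    have hf : Function.Injective f := fun x y => hinj (by simp) (by simp)
    have hskel : G.sameSkeleton (G.skeleton.orient f) := fun _ _ =>
      (SimpleGraph.orient_adj (H := G.skeleton) hf).symm
    exact ⟨_, SimpleGraph.orient_isDAG f, hG.markovEquiv (SimpleGraph.orient_isDAG f) hskel
      (SimpleGraph.orient_not_unshieldedCollider hf fun z => by simpa using hpeo z (by simp))⟩
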